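/- Van der Corput lemma (second-derivative case): if h is C² on [a,b] with |h''(x)| ≥ A > 0 on [a,b], and φ is C¹ on [a,b], then |∫_a^b e^{i h(x)} φ(x) dx| ≤ c·A^{-1/2}·(|φ(b)| + ∫_a^b |φ'(x)| dx) for a constant c independent of a, b, A, h, φ. -/

import Mathlib

/-!
Integrating by parts against the primitive `F y = ∫ x in a..y, exp (I * h x)` reduces the claim
to `‖F y‖ ≤ 10 / √A` for `y ∈ [a, b]`. Up to complex conjugation (`h ↦ -h`) we may assume
`h'' ≥ A`, so `h'` increases at rate at least `A`: it is `≤ -√A` on an initial piece `[a, p]`,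
`≥ √A` on a final piece `[q, b]`, and `q - p ≤ 2 / √A`. On the outer pieces the first-derivative
test (`exp (I * h) = (exp (I * h))' / (I * h')`, integrated by parts once more, with `1 / h'`
monotone) gives `4 / √A` each, and the middle piece is bounded by its length.
-/

open Set intervalIntegral MeasureTheory Complex
open scoped Interval ComplexConjugate

theorem norm_integral_cexp_le_abs_sub (h : ℝ → ℝ) (a b : ℝ) :
    ‖∫ x in a..b, exp (I * h x)‖ ≤ |b - a| := by
  simpa using norm_integral_le_of_norm_le_const (C := 1) fun x _ ↦ (norm_exp_I_mul_ofReal (h x)).le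

theorem norm_integral_cexp_le_of_le_abs_deriv {a b r : ℝ} {h g k : ℝ → ℝ} (hr : 0 < r)
    (hh : ∀ x ∈ [[a, b]], HasDerivWithinAt h (g x) [[a, b]] x)
    (hg : ∀ x ∈ [[a, b]], HasDerivWithinAt g (k x) [[a, b]] x)
    (hk : ContinuousOn k [[a, b]]) (hk0 : ∀ x ∈ [[a, b]], 0 ≤ k x)
    (hgr : ∀ x ∈ [[a, b]], r ≤ |g x|) :
    ‖∫ x in a..b, exp (I * h x)‖ ≤ 4 / r := by
  have hg0 : ∀ x ∈ [[a, b]], g x ≠ 0 := fun x hx h0 ↦ by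
    simpa [h0] using hr.trans_le (hgr x hx)
  have hinv : ∀ x ∈ [[a, b]], |(g x)⁻¹| ≤ 1 / r := fun x hx ↦ by
    rw [abs_inv, one_div]; exact inv_anti₀ hr (hgr x hx)
  have hgc : ContinuousOn g [[a, b]] := fun x hx ↦ (hg x hx).continuousWithinAt
  have hhc : ContinuousOn h [[a, b]] := fun x hx ↦ (hh x hx).continuousWithinAt
  have hec : ContinuousOn (fun x ↦ exp (I * h x)) [[a, b]] := by fun_prop
  -- `exp (I * h) = u * (exp (I * h))'`
  set u : ℝ → ℂ := fun x ↦ -I * ((g x)⁻¹ : ℝ)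
  have hu : ∀ x ∈ [[a, b]], HasDerivWithinAt u (I * ((k x / g x ^ 2 : ℝ))) [[a, b]] x :=
    fun x hx ↦ ((hg x hx).inv (hg0 x hx)).ofReal_comp.const_mul (-I) |>.congr_deriv
      (by push_cast; ring)
  have he : ∀ x ∈ [[a, b]],
      HasDerivWithinAt (fun x ↦ exp (I * h x)) (exp (I * h x) * (I * g x)) [[a, b]] x :=
    fun x hx ↦ ((hh x hx).ofReal_comp.const_mul I).cexp
  have hk' : ContinuousOn (fun x ↦ k x / g x ^ 2) [[a, b]] :=
    hk.div (hgc.pow 2) fun x hx ↦ pow_ne_zero 2 (hg0 x hx)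
  have hftc : ∫ x in a..b, k x / g x ^ 2 = (g a)⁻¹ - (g b)⁻¹ := by
    rw [integral_eq_sub_of_hasDeriv_right (f := fun x ↦ -(g x)⁻¹)
      (hgc.inv₀ hg0).neg (fun x hx ↦ ?_) hk'.intervalIntegrable]
    · ring
    have hx' : x ∈ [[a, b]] := mem_Icc_of_Ioo hx
    exact (((hg x hx').hasDerivAt (Icc_mem_nhds hx.1 hx.2)).inv (hg0 x hx')).neg.hasDerivWithinAt
      |>.congr_deriv (by ring)
  have hrem : ‖∫ x in a..b, I * ((k x / g x ^ 2 : ℝ)) * exp (I * h x)‖ ≤ 2 / r := by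
    have hnorm : ∀ x ∈ [[a, b]], ‖I * ((k x / g x ^ 2 : ℝ)) * exp (I * h x)‖ = k x / g x ^ 2 :=
      fun x hx ↦ by simp [abs_of_nonneg (hk0 x hx)]
    calc _ ≤ |∫ x in a..b, ‖I * ((k x / g x ^ 2 : ℝ)) * exp (I * h x)‖| :=
          norm_integral_le_abs_integral_norm
      _ = |(g a)⁻¹ - (g b)⁻¹| := by rw [integral_congr hnorm, hftc]
      _ ≤ 1 / r + 1 / r := (abs_sub _ _).trans (add_le_add (hinv a (by simp)) (hinv b (by simp)))
      _ = 2 / r := by ring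
  have hbdry : ∀ x ∈ [[a, b]], ‖u x * exp (I * h x)‖ ≤ 1 / r := fun x hx ↦ by
    simpa [u] using hinv x hx
  have hparts := integral_mul_deriv_eq_deriv_mul_of_hasDerivWithinAt hu he
    (continuousOn_const.mul (continuous_ofReal.comp_continuousOn hk')).intervalIntegrable
    (hec.mul (continuousOn_const.mul (continuous_ofReal.comp_continuousOn hgc))).intervalIntegrable
  rw [integral_congr (g := fun x ↦ exp (I * h x)) (fun x hx ↦ ?_)] at hparts
  · rw [hparts]
    calc _ ≤ ‖u b * exp (I * h b)‖ + ‖u a * exp (I * h a)‖ + 2 / r :=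
          (norm_sub_le _ _).trans (add_le_add (norm_sub_le _ _) hrem)
      _ ≤ 1 / r + 1 / r + 2 / r := by gcongr <;> apply hbdry <;> simp
      _ = 4 / r := by ring
  · simp only [u]
    field_simp [ofReal_ne_zero.2 (hg0 x hx)]
    rw [I_sq, mul_assoc, ← ofReal_mul, one_div_mul_cancel (hg0 x hx)]
    simp

theorem ContinuousOn.exists_mem_Icc_crossing {a b : ℝ} {g : ℝ → ℝ} (hab : a ≤ b)
    (hg : ContinuousOn g (Icc a b)) (t : ℝ) :
    ∃ p ∈ Icc a b, (a < p → g p ≤ t) ∧ (p < b → t ≤ g p) := by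
  by_cases ha : t ≤ g a
  · exact ⟨a, left_mem_Icc.2 hab, fun h ↦ (lt_irrefl a h).elim, fun _ ↦ ha⟩
  by_cases hb : g b ≤ t
  · exact ⟨b, right_mem_Icc.2 hab, fun _ ↦ hb, fun h ↦ (lt_irrefl b h).elim⟩
  obtain ⟨p, hp, hgp⟩ := intermediate_value_Icc hab hg ⟨(not_le.1 ha).le, (not_le.1 hb).le⟩
  exact ⟨p, hp, fun _ ↦ hgp.le, fun _ ↦ hgp.ge⟩

theorem mul_sub_le_sub_of_hasDerivWithinAt_Icc {a b A : ℝ} {g k : ℝ → ℝ}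
    (hg : ∀ x ∈ Icc a b, HasDerivWithinAt g (k x) (Icc a b) x) (hkA : ∀ x ∈ Icc a b, A ≤ k x) :
    ∀ x ∈ Icc a b, ∀ y ∈ Icc a b, x ≤ y → A * (y - x) ≤ g y - g x := by
  have hg' : ∀ x ∈ interior (Icc a b), HasDerivAt g (k x) x := fun x hx ↦
    (hg x (interior_subset hx)).hasDerivAt (mem_interior_iff_mem_nhds.1 hx)
  exact (convex_Icc a b).mul_sub_le_image_sub_of_le_deriv
    (fun x hx ↦ (hg x hx).continuousWithinAt)
    (fun x hx ↦ (hg' x hx).differentiableAt.differentiableWithinAt)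
    fun x hx ↦ (hg' x hx).deriv ▸ hkA x (interior_subset hx)

theorem norm_integral_cexp_le_of_le_deriv_deriv {a b A : ℝ} {h g k : ℝ → ℝ} (hab : a ≤ b)
    (hA : 0 < A) (hh : ∀ x ∈ Icc a b, HasDerivWithinAt h (g x) (Icc a b) x)
    (hg : ∀ x ∈ Icc a b, HasDerivWithinAt g (k x) (Icc a b) x)
    (hk : ContinuousOn k (Icc a b)) (hkA : ∀ x ∈ Icc a b, A ≤ k x) :
    ‖∫ x in a..b, exp (I * h x)‖ ≤ 10 / √A := by
  set r := √A
  have hr : 0 < r := Real.sqrt_pos.2 hA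
  have hhc : ContinuousOn h (Icc a b) := fun x hx ↦ (hh x hx).continuousWithinAt
  have hec : ContinuousOn (fun x ↦ exp (I * h x)) (Icc a b) := by fun_prop
  have hgc : ContinuousOn g (Icc a b) := fun x hx ↦ (hg x hx).continuousWithinAt
  have hgrow := mul_sub_le_sub_of_hasDerivWithinAt_Icc hg hkA
  have hmono : MonotoneOn g (Icc a b) := fun x hx y hy hxy ↦
    sub_nonneg.1 ((mul_nonneg hA.le (sub_nonneg.2 hxy)).trans (hgrow x hx y hy hxy))
  have hfirst : ∀ c d, a ≤ c → c ≤ d → d ≤ b → (∀ x ∈ Icc c d, r ≤ |g x|) →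
      ‖∫ x in c..d, exp (I * h x)‖ ≤ 4 / r := fun c d hac hcd hdb hgr ↦ by
    have hsub : [[c, d]] ⊆ Icc a b := by rw [uIcc_of_le hcd]; exact Icc_subset_Icc hac hdb
    rw [← uIcc_of_le hcd] at hgr
    exact norm_integral_cexp_le_of_le_abs_deriv hr (fun x hx ↦ (hh x (hsub hx)).mono hsub)
      (fun x hx ↦ (hg x (hsub hx)).mono hsub) (hk.mono hsub)
      (fun x hx ↦ hA.le.trans (hkA x (hsub hx))) hgr
  obtain ⟨p, hp, hp_left, hp_right⟩ := hgc.exists_mem_Icc_crossing hab (-r)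
  obtain ⟨q, hq, hq_left, hq_right⟩ :=
    (hgc.mono (Icc_subset_Icc_left hp.1)).exists_mem_Icc_crossing hp.2 r
  have hq' : q ∈ Icc a b := ⟨hp.1.trans hq.1, hq.2⟩
  have h₁ : ‖∫ x in a..p, exp (I * h x)‖ ≤ 4 / r := by
    rcases hp.1.eq_or_lt with rfl | hap
    · simp only [integral_same, norm_zero]; positivity
    refine hfirst a p le_rfl hp.1 hp.2 fun x hx ↦ le_abs.2 (Or.inr ?_)
    linarith [hmono ⟨hx.1, hx.2.trans hp.2⟩ hp hx.2, hp_left hap]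
  have h₂ : ‖∫ x in p..q, exp (I * h x)‖ ≤ 2 / r := by
    refine (norm_integral_cexp_le_abs_sub h p q).trans ?_
    rcases hq.1.eq_or_lt with rfl | hpq
    · simp only [sub_self, abs_zero]; positivity
    rw [abs_of_nonneg (sub_nonneg.2 hq.1), le_div_iff₀ hr]
    nlinarith [hgrow p hp q hq' hq.1, hq_left hpq, hp_right (hpq.trans_le hq.2),
      Real.mul_self_sqrt hA.le]
  have h₃ : ‖∫ x in q..b, exp (I * h x)‖ ≤ 4 / r := by
    rcases hq.2.eq_or_lt with rfl | hqb
    · simp only [integral_same, norm_zero]; positivity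
    refine hfirst q b hq'.1 hq.2 le_rfl fun x hx ↦ le_abs.2 (Or.inl ?_)
    linarith [hmono hq' ⟨hq'.1.trans hx.1, hx.2⟩ hx.1, hq_right hqb]
  have hint : ∀ c ∈ Icc a b, ∀ d ∈ Icc a b, IntervalIntegrable (fun x ↦ exp (I * h x)) volume c d :=
    fun c hc d hd ↦ (hec.mono (uIcc_subset_Icc hc hd)).intervalIntegrable
  have hb : b ∈ Icc a b := right_mem_Icc.2 hab
  rw [← integral_add_adjacent_intervals (hint a (left_mem_Icc.2 hab) p hp) (hint p hp b hb),
    ← integral_add_adjacent_intervals (hint p hp q hq') (hint q hq' b hb)]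
  calc _ ≤ 4 / r + (2 / r + 4 / r) :=
        (norm_add_le _ _).trans (add_le_add h₁ ((norm_add_le _ _).trans (add_le_add h₂ h₃)))
    _ = 10 / r := by ring

theorem IsPreconnected.forall_le_or_forall_le_neg {α : Type*} [TopologicalSpace α] {s : Set α}
    (hs : IsPreconnected s) {f : α → ℝ} (hf : ContinuousOn f s) {c : ℝ} (hc : 0 < c)
    (hfc : ∀ x ∈ s, c ≤ |f x|) : (∀ x ∈ s, c ≤ f x) ∨ ∀ x ∈ s, c ≤ -f x := by
  by_contra! hcon
  obtain ⟨⟨x, hx, hfx⟩, y, hy, hfy⟩ := hcon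
  have hx0 : f x ≤ 0 := by
    by_contra! hpos; exact hfx.not_ge (abs_of_pos hpos ▸ hfc x hx)
  have hy0 : 0 ≤ f y := by
    by_contra! hneg; exact hfy.not_ge (abs_of_neg hneg ▸ hfc y hy)
  obtain ⟨z, hz, hfz⟩ := hs.intermediate_value hx hy hf ⟨hx0, hy0⟩
  simpa [hfz, hc.not_ge] using hfc z hz

theorem norm_integral_cexp_neg (h : ℝ → ℝ) (a b : ℝ) :
    ‖∫ x in a..b, exp (I * ↑(-h x))‖ = ‖∫ x in a..b, exp (I * h x)‖ := by
  have hconj : ∀ x, exp (I * ↑(-h x)) = conj (exp (I * h x)) := fun x ↦ by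
    rw [← exp_conj]; simp
  simp_rw [hconj, intervalIntegral_conj, RCLike.norm_conj]

theorem norm_integral_cexp_le_of_le_abs_deriv_deriv {a b A : ℝ} {h g k : ℝ → ℝ} (hab : a ≤ b)
    (hA : 0 < A) (hh : ∀ x ∈ Icc a b, HasDerivWithinAt h (g x) (Icc a b) x)
    (hg : ∀ x ∈ Icc a b, HasDerivWithinAt g (k x) (Icc a b) x)
    (hk : ContinuousOn k (Icc a b)) (hkA : ∀ x ∈ Icc a b, A ≤ |k x|) :
    ‖∫ x in a..b, exp (I * h x)‖ ≤ 10 / √A := by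
  rcases isPreconnected_Icc.forall_le_or_forall_le_neg hk hA hkA with hpos | hneg
  · exact norm_integral_cexp_le_of_le_deriv_deriv hab hA hh hg hk hpos
  · rw [← norm_integral_cexp_neg]
    exact norm_integral_cexp_le_of_le_deriv_deriv hab hA (fun x hx ↦ (hh x hx).neg)
      (fun x hx ↦ (hg x hx).neg) hk.neg hneg

theorem eqOn_derivWithin_derivWithin_Icc {E : Type*} [NormedAddCommGroup E] [NormedSpace ℝ E]
    (f : ℝ → E) (a b : ℝ) :
    EqOn (derivWithin (derivWithin f (Icc a b)) (Icc a b)) (deriv (deriv f)) (Ioo a b) := by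
  have hfirst : EqOn (derivWithin f (Icc a b)) (deriv f) (Ioo a b) := fun x hx ↦
    derivWithin_of_mem_nhds (Icc_mem_nhds hx.1 hx.2)
  intro x hx
  rw [derivWithin_of_mem_nhds (Icc_mem_nhds hx.1 hx.2)]
  exact hfirst.deriv isOpen_Ioo hx

theorem norm_integral_cexp_le_of_contDiffOn {a b A : ℝ} {h : ℝ → ℝ} (hab : a ≤ b) (hA : 0 < A)
    (hh : ContDiffOn ℝ 2 h (Icc a b)) (hhA : ∀ x ∈ Ioo a b, A ≤ |deriv (deriv h) x|) :
    ‖∫ x in a..b, exp (I * h x)‖ ≤ 10 / √A := by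
  rcases hab.eq_or_lt with rfl | hab
  · simp only [integral_same, norm_zero]; positivity
  set g := derivWithin h (Icc a b)
  set k := derivWithin g (Icc a b)
  have hg : ContDiffOn ℝ 1 g (Icc a b) := hh.derivWithin (uniqueDiffOn_Icc hab) (by norm_num)
  have hk : ContinuousOn k (Icc a b) := hg.continuousOn_derivWithin (uniqueDiffOn_Icc hab) le_rfl
  have hkA : ∀ x ∈ closure (Ioo a b), A ≤ |k x| := by
    refine le_on_closure (fun x hx ↦ ?_) continuousOn_const (closure_Ioo hab.ne ▸ hk.abs)
    exact (hhA x hx).trans_eq (congrArg abs (eqOn_derivWithin_derivWithin_Icc h a b hx).symm)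
  rw [closure_Ioo hab.ne] at hkA
  exact norm_integral_cexp_le_of_le_abs_deriv_deriv hab.le hA
    (fun x hx ↦ (hh.differentiableOn two_ne_zero x hx).hasDerivWithinAt)
    (fun x hx ↦ (hg.differentiableOn one_ne_zero x hx).hasDerivWithinAt) hk hkA

theorem ContinuousOn.hasDerivAt_integral_of_mem_Ioo {E : Type*} [NormedAddCommGroup E]
    [NormedSpace ℝ E] [CompleteSpace E] {f : ℝ → E} {a b x : ℝ} (hf : ContinuousOn f (Icc a b))
    (hx : x ∈ Ioo a b) : HasDerivAt (fun y ↦ ∫ t in a..y, f t) (f x) x :=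
  integral_hasDerivAt_right
    ((hf.mono (Icc_subset_Icc_right hx.2.le)).intervalIntegrable_of_Icc hx.1.le)
    ((hf.mono Ioo_subset_Icc_self).stronglyMeasurableAtFilter isOpen_Ioo x hx)
    (hf.continuousAt (Icc_mem_nhds hx.1 hx.2))

theorem norm_integral_mul_le_of_norm_primitive_le {E : Type*} [NormedCommRing E]
    [NormedAlgebra ℝ E] [CompleteSpace E] {a b M : ℝ} {f φ φ' : ℝ → E} (hab : a ≤ b)
    (hf : ContinuousOn f (Icc a b)) (hφ : ContinuousOn φ (Icc a b))
    (hφ' : ∀ x ∈ Ioo a b, HasDerivAt φ (φ' x) x) (hφ'i : IntervalIntegrable φ' volume a b)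
    (hM : ∀ y ∈ Icc a b, ‖∫ x in a..y, f x‖ ≤ M) :
    ‖∫ x in a..b, f x * φ x‖ ≤ M * (‖φ b‖ + ∫ x in a..b, ‖φ' x‖) := by
  set F := fun y ↦ ∫ x in a..y, f x
  have hFc : ContinuousOn F (Icc a b) := by
    rw [← uIcc_of_le hab]
    exact continuousOn_primitive_interval ((uIcc_of_le hab).symm ▸ hf.integrableOn_Icc)
  have hparts := integral_mul_deriv_eq_deriv_mul_of_hasDerivAt (u := φ) (v := F)
    (by rwa [uIcc_of_le hab]) (by rwa [uIcc_of_le hab])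
    (by rwa [min_eq_left hab, max_eq_right hab])
    (by rw [min_eq_left hab, max_eq_right hab]; exact fun x ↦ hf.hasDerivAt_integral_of_mem_Ioo)
    hφ'i (hf.intervalIntegrable_of_Icc hab)
  have hM' : ∀ᵐ x, x ∈ Ioc a b → ‖φ' x * F x‖ ≤ ‖φ' x‖ * M := ae_of_all _ fun x hx ↦
    (norm_mul_le _ _).trans (by gcongr; exact hM x (Ioc_subset_Icc_self hx))
  calc ‖∫ x in a..b, f x * φ x‖ = ‖φ b * F b - ∫ x in a..b, φ' x * F x‖ := by
        simp_rw [mul_comm (f _), hparts, F, integral_same, mul_zero, sub_zero]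
    _ ≤ ‖φ b‖ * M + ∫ x in a..b, ‖φ' x‖ * M := (norm_sub_le _ _).trans (add_le_add
        ((norm_mul_le _ _).trans (by gcongr; exact hM b (right_mem_Icc.2 hab)))
        (norm_integral_le_of_norm_le hab hM' (hφ'i.norm.mul_const M)))
    _ = M * (‖φ b‖ + ∫ x in a..b, ‖φ' x‖) := by
        rw [intervalIntegral.integral_mul_const]; ring

theorem ContDiffOn.intervalIntegrable_deriv {E : Type*} [NormedAddCommGroup E] [NormedSpace ℝ E]
    {φ : ℝ → E} {a b : ℝ} (hab : a < b) (hφ : ContDiffOn ℝ 1 φ (Icc a b)) :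
    IntervalIntegrable (deriv φ) volume a b := by
  rw [intervalIntegrable_iff_integrableOn_Ioo_of_le hab.le]
  exact ((hφ.continuousOn_derivWithin (uniqueDiffOn_Icc hab) le_rfl).integrableOn_Icc.mono_set
    Ioo_subset_Icc_self).congr_fun (fun x hx ↦ derivWithin_of_mem_nhds (Icc_mem_nhds hx.1 hx.2))
    measurableSet_Ioo

/-- Van der Corput lemma, second-derivative case: if h is C² on [a,b] with |h''| ≥ A > 0,
    and φ is C¹, then |∫ e^{ih} φ| ≤ c A^{-1/2} (|φ(b)| + ∫ |φ'|). -/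
theorem van_der_corput_second :
    ∃ c : ℝ, 0 < c ∧ ∀ (a b A : ℝ) (h : ℝ → ℝ) (φ : ℝ → ℂ),
      a < b → 0 < A →
      ContDiffOn ℝ 2 h (Icc a b) →
      (∀ x ∈ Icc a b, A ≤ |deriv (deriv h) x|) →
      ContDiffOn ℝ 1 φ (Icc a b) →
      ‖∫ x in a..b, Complex.exp (Complex.I * (h x : ℂ)) * φ x‖ ≤
        c * A ^ (-(1 : ℝ) / 2) * (‖φ b‖ + ∫ x in a..b, ‖deriv φ x‖) := by
  refine ⟨10, by norm_num, fun a b A h φ hab hA hh hhA hφ ↦ ?_⟩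
  have hrpow : A ^ (-(1 : ℝ) / 2) = (√A)⁻¹ := by
    rw [neg_div, Real.rpow_neg hA.le, Real.sqrt_eq_rpow]
  have hprimitive : ∀ y ∈ Icc a b, ‖∫ x in a..y, exp (I * h x)‖ ≤ 10 * A ^ (-(1 : ℝ) / 2) :=
    fun y hy ↦ by
      rw [hrpow, ← div_eq_mul_inv]
      exact norm_integral_cexp_le_of_contDiffOn hy.1 hA (hh.mono (Icc_subset_Icc_right hy.2))
        fun x hx ↦ hhA x ⟨hx.1.le, hx.2.le.trans hy.2⟩
  have hhc := hh.continuousOn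
  exact norm_integral_mul_le_of_norm_primitive_le hab.le (by fun_prop) hφ.continuousOn
    (fun x hx ↦ ((hφ.differentiableOn one_ne_zero x (Ioo_subset_Icc_self hx)).differentiableAt
      (Icc_mem_nhds hx.1 hx.2)).hasDerivAt) (hφ.intervalIntegrable_deriv hab) hprimitive
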